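/- The Killing form κ := tr₃(θ_L ∘ ℓ ∘ (id_L ⊗ ℓ)) of a Lie algebra (L, ℓ) in an additive symmetric ribbon category is symmetric: κ = κ ∘ c_{L,L}. -/

import Mathlib

open CategoryTheory MonoidalCategory

variable {C : Type*} [Category C] [MonoidalCategory C] [Preadditive C]
  [SymmetricCategory C] [MonoidalPreadditive C] [RigidCategory C]

/-- The sovereign structure `σ_U : U^∨ ⟶ ^∨U` induced by a twist `θ`. -/
def sovereignOfTwist (θ : ∀ X : C, X ⟶ X) (U : C) : Uᘁ ⟶ ᘁU :=
  (ρ_ (Uᘁ)).inv ≫ ((Uᘁ) ◁ η_ (ᘁU) U) ≫ (α_ (Uᘁ) (ᘁU) U).inv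
    ≫ ((β_ (ᘁU) (Uᘁ)).inv ▷ U) ≫ (α_ (ᘁU) (Uᘁ) U).hom
    ≫ ((ᘁU) ◁ ((Uᘁ) ◁ θ U)) ≫ ((ᘁU) ◁ ε_ U (Uᘁ)) ≫ (ρ_ (ᘁU)).hom

/-- Partial trace over the last tensor factor of `f : X ⊗ V ⟶ V`. -/
def partialTrace (θ : ∀ X : C, X ⟶ X) {X V : C} (f : X ⊗ V ⟶ V) : X ⟶ 𝟙_ C :=
  (ρ_ X).inv ≫ (X ◁ η_ V (Vᘁ)) ≫ (α_ X V (Vᘁ)).inv ≫ (f ▷ (Vᘁ))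
    ≫ (V ◁ sovereignOfTwist θ V) ≫ ε_ (ᘁV) V

/-- The Killing form `κ := tr₃(θ_L ∘ ℓ ∘ (id_L ⊗ ℓ)) : L ⊗ L ⟶ 𝟙` of a Lie algebra
`(L, ℓ)` in a symmetric ribbon category. -/
def catKillingForm (θ : ∀ X : C, X ⟶ X) {L : C} (ℓ : L ⊗ L ⟶ L) : L ⊗ L ⟶ 𝟙_ C :=
  partialTrace θ ((α_ L L L).hom ≫ (L ◁ ℓ) ≫ ℓ ≫ θ L)

/-!
In a symmetric category the ribbon axioms force `θ ≫ θ = 𝟙`: naturality of `θ` at the evaluation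
gives `(θ_{Xᘁ} ⊗ θ_X) ≫ ε = ε`, and `θ_{Xᘁ} = (θ_X)ᘁ` moves the first twist onto `X`. Hence the
twist in `κ` cancels the one inside the sovereign structure, and `κ` is the partial trace of
`ℓ⟨3⟩` taken with the symmetric braiding alone. Through `L ⊗ Lᘁ ≅ End L` this trace is the
pairing `(ad x, ad y) ↦ tr (ad x ∘ ad y)`, and that pairing is invariant under the symmetry:
sliding one cap along the braiding exchanges the two caps.
-/

open BraidedCategory

section Rigid

variable {D : Type*} [Category D] [MonoidalCategory D]

lemma eq_of_whiskerLeft_comp_evaluation_eq {X Y : D} [HasRightDual X] {f g : Y ⟶ X}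
    (h : Xᘁ ◁ f ≫ ε_ X Xᘁ = Xᘁ ◁ g ≫ ε_ X Xᘁ) : f = g := by
  have hmate (k : Y ⟶ X) :
      Xᘁ ◁ k ≫ ε_ X Xᘁ = (tensorLeftHomEquiv Y X Xᘁ (𝟙_ D)).symm (k ≫ (ρ_ X).inv) := by
    rw [tensorLeftHomEquiv_symm_naturality]
    simp [tensorLeftHomEquiv, unitors_equal]
  rw [hmate, hmate] at h
  simpa using (tensorLeftHomEquiv Y X Xᘁ (𝟙_ D)).symm.injective h

end Rigid

section Braided

variable {D : Type*} [Category D] [MonoidalCategory D] [BraidedCategory D]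

def braidedPartialTrace {X V : D} [HasRightDual V] (f : X ⊗ V ⟶ V) : X ⟶ 𝟙_ D :=
  tensorRightHomEquiv X V Vᘁ V f ≫ (β_ V Vᘁ).hom ≫ ε_ V Vᘁ

/-- For `e = ε_ V Vᘁ` and `V ⊗ Vᘁ ≅ End V`, this is the pairing `(a, b) ↦ tr (a ∘ b)`. -/
def traceForm {A B : D} (e : B ⊗ A ⟶ 𝟙_ D) : (A ⊗ B) ⊗ (A ⊗ B) ⟶ 𝟙_ D :=
  (α_ A B (A ⊗ B)).hom ≫ A ◁ ((α_ B A B).inv ≫ e ▷ B ≫ (λ_ B).hom) ≫ (β_ A B).hom ≫ e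

lemma braidedPartialTrace_assoc_whiskerLeft_comp {X Y V : D} [HasRightDual V]
    (a : X ⊗ V ⟶ V) (b : Y ⊗ V ⟶ V) :
    braidedPartialTrace ((α_ X Y V).hom ≫ X ◁ b ≫ a) =
      (tensorRightHomEquiv X V Vᘁ V a ⊗ₘ tensorRightHomEquiv Y V Vᘁ V b) ≫
        traceForm (ε_ V Vᘁ) := by
  set ha := tensorRightHomEquiv X V Vᘁ V a
  have hsnake : ha ▷ (V ⊗ Vᘁ) ≫ traceForm (ε_ V Vᘁ) =
      (α_ X V Vᘁ).inv ≫ a ▷ Vᘁ ≫ (β_ V Vᘁ).hom ≫ ε_ V Vᘁ := by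
    calc
      _ = (α_ X V Vᘁ).inv ≫ (tensorRightHomEquiv X V Vᘁ V).symm ha ▷ Vᘁ
          ≫ (β_ V Vᘁ).hom ≫ ε_ V Vᘁ := by
        simp only [traceForm, tensorRightHomEquiv, Equiv.coe_fn_symm_mk]; monoidal
      _ = _ := by rw [Equiv.symm_apply_apply]
  rw [tensorHom_def', Category.assoc, hsnake]
  simp only [braidedPartialTrace, tensorRightHomEquiv, Equiv.coe_fn_mk]
  monoidal

end Braided

section Symmetric

variable {D : Type*} [Category D] [MonoidalCategory D] [SymmetricCategory D]

/-- A strand crossing one leg of a cap `e` may cross the other leg instead. -/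
lemma cap_slide {A B Z : D} (e : A ⊗ B ⟶ 𝟙_ D) :
    A ◁ (β_ Z B).hom ≫ (α_ A B Z).inv ≫ e ▷ Z ≫ (λ_ Z).hom =
      (α_ A Z B).inv ≫ (β_ A Z).hom ▷ B ≫ (α_ Z A B).hom ≫ Z ◁ e ≫ (ρ_ Z).hom := by
  have hcap : Z ◁ e ≫ (ρ_ Z).hom = (β_ Z (A ⊗ B)).hom ≫ e ▷ Z ≫ (λ_ Z).hom := by
    rw [← braiding_naturality_right_assoc, braiding_tensorUnit_right]; simp
  rw [hcap, braiding_tensor_right_hom]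
  simp only [Category.assoc, Iso.hom_inv_id_assoc]
  rw [← comp_whiskerRight_assoc, SymmetricCategory.symmetry]
  simp

lemma braiding_comp_traceForm {A B : D} (e : B ⊗ A ⟶ 𝟙_ D) :
    (β_ (A ⊗ B) (A ⊗ B)).hom ≫ traceForm e = traceForm e := by
  set e' := (β_ A B).hom ≫ e
  calc
    _ = 𝟙 _ ⊗≫ (A ◁ ((β_ B A).hom ▷ B))
        ⊗≫ (((A ⊗ A) ◁ (β_ B B).hom) ≫ ((β_ A A).hom ▷ (B ⊗ B)))
        ⊗≫ (A ◁ ((β_ A B).hom ▷ B)) ⊗≫ (A ◁ (e ▷ B)) ⊗≫ e' := by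
      simp only [traceForm, e']
      rw [braiding_tensor_left_hom A B (A ⊗ B), braiding_tensor_right_hom B A B,
        braiding_tensor_right_hom A A B]
      monoidal
    _ = 𝟙 _ ⊗≫ (A ◁ ((β_ B A).hom ▷ B)) ⊗≫ ((β_ A A).hom ▷ (B ⊗ B))
        ⊗≫ (A ◁ ((A ◁ (β_ B B).hom) ≫ (α_ A B B).inv ≫ (e' ▷ B) ≫ (λ_ B).hom)) ⊗≫ e' := by
      rw [whisker_exchange]; simp only [e']; monoidal
    _ = 𝟙 _ ⊗≫ (A ◁ ((β_ B A).hom ▷ B)) ⊗≫ ((β_ A A).hom ▷ (B ⊗ B))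
        ⊗≫ (A ◁ ((β_ A B).hom ▷ B)) ⊗≫ ((A ⊗ B) ◁ e' ≫ e' ▷ 𝟙_ D) ⊗≫ 𝟙 _ := by
      rw [cap_slide]; monoidal
    _ = 𝟙 _ ⊗≫ (A ◁ ((β_ B A).hom ▷ B))
        ⊗≫ (((β_ A (A ⊗ B)).hom ≫ (e' ▷ A)) ▷ B) ⊗≫ e' := by
      rw [whisker_exchange, braiding_tensor_right_hom]; monoidal
    _ = 𝟙 _ ⊗≫ (A ◁ (((β_ B A).hom ≫ e') ▷ B)) ⊗≫ e' := by
      rw [← braiding_naturality_right, braiding_tensorUnit_right]; monoidal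
    _ = traceForm e := by
      simp only [traceForm, e', SymmetricCategory.symmetry_assoc]; monoidal

lemma braidedPartialTrace_cyclic {X Y V : D} [HasRightDual V]
    (a : X ⊗ V ⟶ V) (b : Y ⊗ V ⟶ V) :
    braidedPartialTrace ((α_ X Y V).hom ≫ X ◁ b ≫ a) =
      (β_ X Y).hom ≫ braidedPartialTrace ((α_ Y X V).hom ≫ Y ◁ a ≫ b) := by
  rw [braidedPartialTrace_assoc_whiskerLeft_comp, braidedPartialTrace_assoc_whiskerLeft_comp,
    ← braiding_naturality_assoc, braiding_comp_traceForm]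

end Symmetric

section Ribbon

variable {D : Type*} [Category D] [MonoidalCategory D] [SymmetricCategory D] [RigidCategory D]

lemma twist_comp_twist (θ : ∀ X : D, X ⟶ X)
    (hθnat : ∀ {X Y : D} (g : X ⟶ Y), g ≫ θ Y = θ X ≫ g)
    (hθone : θ (𝟙_ D) = 𝟙 (𝟙_ D))
    (hθtensor : ∀ X Y : D, θ (X ⊗ Y) = (β_ X Y).hom ≫ (β_ Y X).hom ≫ (θ X ⊗ₘ θ Y))
    (hθdual : ∀ X : D, θ (Xᘁ) = (θ X)ᘁ) (X : D) :
    θ X ≫ θ X = 𝟙 X := by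
  have hε : (θ Xᘁ ⊗ₘ θ X) ≫ ε_ X Xᘁ = ε_ X Xᘁ := by
    simpa [hθone, hθtensor] using (hθnat (ε_ X Xᘁ)).symm
  apply eq_of_whiskerLeft_comp_evaluation_eq
  rw [MonoidalCategory.whiskerLeft_comp, Category.assoc, ← rightAdjointMate_comp_evaluation,
    ← hθdual, ← tensorHom_def'_assoc, hε, MonoidalCategory.whiskerLeft_id, Category.id_comp]

lemma whiskerLeft_sovereignOfTwist_comp_evaluation (θ : ∀ X : D, X ⟶ X) (V : D) :
    V ◁ sovereignOfTwist θ V ≫ ε_ (ᘁV) V = (β_ V Vᘁ).hom ≫ Vᘁ ◁ θ V ≫ ε_ V Vᘁ := by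
  have hslide : (ρ_ Vᘁ).inv ≫ Vᘁ ◁ η_ (ᘁV) V ≫ (α_ Vᘁ (ᘁV) V).inv ≫ (β_ (ᘁV) Vᘁ).inv ▷ V
      ≫ (α_ (ᘁV) Vᘁ V).hom = (λ_ Vᘁ).inv ≫ η_ (ᘁV) V ▷ Vᘁ ≫ (α_ (ᘁV) V Vᘁ).hom
      ≫ (ᘁV) ◁ (β_ V Vᘁ).hom := by
    rw [← cancel_mono ((ᘁV) ◁ (β_ V Vᘁ).inv)]
    have h := braiding_inv_naturality_right Vᘁ (η_ (ᘁV) V)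
    simp only [braiding_tensor_left_inv, braiding_inv_tensorUnit_left] at h
    rw [← cancel_mono (α_ (ᘁV) V Vᘁ).inv]
    simp only [Category.assoc] at h ⊢
    rw [h]
    simp
  have hmate : sovereignOfTwist θ V ≫ (ρ_ _).inv =
      tensorLeftHomEquiv Vᘁ (ᘁV) V (𝟙_ D) ((β_ V Vᘁ).hom ≫ Vᘁ ◁ θ V ≫ ε_ V Vᘁ) := by
    simp only [sovereignOfTwist, tensorLeftHomEquiv, Equiv.coe_fn_mk, Category.assoc,
      Iso.hom_inv_id, Category.comp_id]
    rw [reassoc_of% hslide]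
    simp
  calc
    _ = (tensorLeftHomEquiv Vᘁ (ᘁV) V (𝟙_ D)).symm (sovereignOfTwist θ V ≫ (ρ_ _).inv) := by
      simp [tensorLeftHomEquiv, unitors_equal]
    _ = _ := by rw [hmate, Equiv.symm_apply_apply]

lemma partialTrace_eq_braidedPartialTrace (θ : ∀ X : D, X ⟶ X) {X V : D} (f : X ⊗ V ⟶ V) :
    partialTrace θ f = braidedPartialTrace (f ≫ θ V) := by
  simp only [partialTrace, braidedPartialTrace, tensorRightHomEquiv, Equiv.coe_fn_mk,
    whiskerLeft_sovereignOfTwist_comp_evaluation, comp_whiskerRight, Category.assoc,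
    braiding_naturality_left_assoc]

lemma catKillingForm_eq_braidedPartialTrace (θ : ∀ X : D, X ⟶ X) {L : D} (ℓ : L ⊗ L ⟶ L)
    (hθ : θ L ≫ θ L = 𝟙 L) :
    catKillingForm θ ℓ = braidedPartialTrace ((α_ L L L).hom ≫ L ◁ ℓ ≫ ℓ) := by
  rw [catKillingForm, partialTrace_eq_braidedPartialTrace]
  simp only [Category.assoc, hθ, Category.comp_id]

end Ribbon

theorem catKillingForm_symmetric_general (θ : ∀ X : C, X ⟶ X)
    (hθnat : ∀ {X Y : C} (g : X ⟶ Y), g ≫ θ Y = θ X ≫ g)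
    (hθone : θ (𝟙_ C) = 𝟙 (𝟙_ C))
    (hθtensor : ∀ X Y : C, θ (X ⊗ Y) = (β_ X Y).hom ≫ (β_ Y X).hom ≫ (θ X ⊗ₘ θ Y))
    (hθdual : ∀ X : C, θ (Xᘁ) = (θ X)ᘁ)
    (L : C) (ℓ : L ⊗ L ⟶ L) :
    catKillingForm θ ℓ = (β_ L L).hom ≫ catKillingForm θ ℓ := by
  rw [catKillingForm_eq_braidedPartialTrace θ ℓ
    (twist_comp_twist θ hθnat hθone hθtensor hθdual L)]
  exact braidedPartialTrace_cyclic ℓ ℓ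

/-- The Killing form of a Lie algebra in an additive symmetric ribbon
category is symmetric: `κ = κ ∘ c_{L,L}`. -/
theorem catKillingForm_symmetric (θ : ∀ X : C, X ⟶ X)
    (hθiso : ∀ X, IsIso (θ X))
    (hθnat : ∀ {X Y : C} (g : X ⟶ Y), g ≫ θ Y = θ X ≫ g)
    (hθone : θ (𝟙_ C) = 𝟙 (𝟙_ C))
    (hθtensor : ∀ X Y : C, θ (X ⊗ Y) = (β_ X Y).hom ≫ (β_ Y X).hom ≫ (θ X ⊗ₘ θ Y))
    (hθdual : ∀ X : C, θ (Xᘁ) = (θ X)ᘁ)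
    (L : C) (ℓ : L ⊗ L ⟶ L)
    (hanti : (𝟙 (L ⊗ L) + (β_ L L).hom) ≫ ℓ = 0)
    (hjac : (𝟙 (L ⊗ (L ⊗ L)) + ((α_ L L L).inv ≫ (β_ (L ⊗ L) L).hom)
        + ((α_ L L L).inv ≫ (β_ (L ⊗ L) L).hom) ≫ ((α_ L L L).inv ≫ (β_ (L ⊗ L) L).hom))
        ≫ ((L ◁ ℓ) ≫ ℓ) = 0) :
    catKillingForm θ ℓ = (β_ L L).hom ≫ catKillingForm θ ℓ :=
  catKillingForm_symmetric_general θ hθnat hθone hθtensor hθdual L ℓ
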